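/- Let m and n be integers greater than 1 and set p = gcd(m,n), with p > 1. Let ρ : T_{m×n} → T_{p×p} be the map induced by reduction modulo p in both coordinates. If the preimage under ρ of every line on T_{p×p} is a line on T_{m×n}, then τ(T_{m×n}) = τ(T_{p×p}). -/

import Mathlib

/-- Projection `π_{m,n} : ℤ×ℤ → (ℤ/mℤ)×(ℤ/nℤ)`. -/
def torusProj (m n : ℕ) (P : ℤ × ℤ) : ZMod m × ZMod n :=
  ((P.1 : ZMod m), (P.2 : ZMod n))

/-- `L` is a line on the discrete torus `T_{m×n}`: the image under `π_{m,n}`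
of `{(a+uk, b+vk) : k ∈ ℤ}` with `gcd(u,v)=1`. -/
def IsTorusLine (m n : ℕ) (L : Set (ZMod m × ZMod n)) : Prop :=
  ∃ a b u v : ℤ, Int.gcd u v = 1 ∧
    L = torusProj m n '' {P : ℤ × ℤ | ∃ k : ℤ, P = (a + u * k, b + v * k)}

/-- `X` satisfies the no-three-in-line condition on `T_{m×n}`:
no three distinct points of `X` lie on a common line. -/
def NoThreeInLine (m n : ℕ) (X : Set (ZMod m × ZMod n)) : Prop :=
  ∀ L : Set (ZMod m × ZMod n), IsTorusLine m n L →
    ∀ A ∈ X, ∀ B ∈ X, ∀ C ∈ X,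
      A ∈ L → B ∈ L → C ∈ L → A = B ∨ A = C ∨ B = C

/-- `τ(T_{m×n})`: the maximum cardinality of a subset of `T_{m×n}`
satisfying the no-three-in-line condition. -/
noncomputable def tau (m n : ℕ) : ℕ :=
  sSup {k : ℕ | ∃ X : Set (ZMod m × ZMod n), NoThreeInLine m n X ∧ X.ncard = k}

/-- The reduction map `ρ : T_{m×n} → T_{p×p}` (for `p ∣ m`, `p ∣ n`). -/
def torusRed (m n p : ℕ) (hm : p ∣ m) (hn : p ∣ n)
    (q : ZMod m × ZMod n) : ZMod p × ZMod p :=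
  (ZMod.castHom hm (ZMod p) q.1, ZMod.castHom hn (ZMod p) q.2)

/-- The determinant `D(A,B,C)` with rows `(1,1,1)`, x-coords, y-coords. -/
def detD (A B C : ℤ × ℤ) : ℤ :=
  Matrix.det !![1, 1, 1; A.1, B.1, C.1; A.2, B.2, C.2]

/-!
The reduction `ρ` has a section and maps lines into lines, so a section lifts a
no-three-in-line set of `T_{p×p}` to one of `T_{m×n}` of the same size. Conversely, if
preimages of lines are lines, a no-three-in-line set `X ⊆ T_{m×n}` with at least three points
is mapped injectively by `ρ` (two points with the same image and a third point would lie on the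
preimage of a line) onto a no-three-in-line set of `T_{p×p}`; smaller sets are beaten by any
pair of points of `T_{p×p}`.
-/

open Set

theorem Int.exists_gcd_eq_one_mul (d₁ d₂ : ℤ) :
    ∃ u v k : ℤ, Int.gcd u v = 1 ∧ d₁ = u * k ∧ d₂ = v * k := by
  rcases (Int.gcd d₁ d₂).eq_zero_or_pos with h | h
  · obtain ⟨rfl, rfl⟩ := Int.gcd_eq_zero_iff.mp h
    exact ⟨1, 0, 0, by simp, by simp, by simp⟩
  · obtain ⟨u, v, huv, h₁, h₂⟩ := Int.exists_gcd_one h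
    exact ⟨u, v, _, huv, h₁, h₂⟩

theorem torusProj_surjective (m n : ℕ) : Function.Surjective (torusProj m n) := by
  rintro ⟨x, y⟩
  obtain ⟨a, rfl⟩ := ZMod.intCast_surjective x
  obtain ⟨b, rfl⟩ := ZMod.intCast_surjective y
  exact ⟨(a, b), rfl⟩

theorem exists_isTorusLine_mem_mem (m n : ℕ) (P Q : ZMod m × ZMod n) :
    ∃ L, IsTorusLine m n L ∧ P ∈ L ∧ Q ∈ L := by
  obtain ⟨⟨a, b⟩, rfl⟩ := torusProj_surjective m n P
  obtain ⟨⟨c, d⟩, rfl⟩ := torusProj_surjective m n Q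
  obtain ⟨u, v, k, huv, hc, hd⟩ := Int.exists_gcd_eq_one_mul (c - a) (d - b)
  refine ⟨_, ⟨a, b, u, v, huv, rfl⟩, ⟨_, ⟨0, by simp⟩, rfl⟩, ⟨_, ⟨k, ?_⟩, rfl⟩⟩
  rw [← hc, ← hd]
  simp

theorem noThreeInLine_pair (m n : ℕ) (P Q : ZMod m × ZMod n) : NoThreeInLine m n {P, Q} := by
  intro _ _ A hA B hB C hC _ _ _
  simp only [mem_insert_iff, mem_singleton_iff] at hA hB hC
  rcases hA with rfl | rfl <;> rcases hB with rfl | rfl <;> rcases hC with rfl | rfl <;> simp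

section Reduction

variable {m n p : ℕ} (hpm : p ∣ m) (hpn : p ∣ n)

@[simp]
theorem torusRed_torusProj (P : ℤ × ℤ) :
    torusRed m n p hpm hpn (torusProj m n P) = torusProj p p P := by
  simp [torusRed, torusProj]

theorem torusRed_surjective : Function.Surjective (torusRed m n p hpm hpn) := by
  intro q
  obtain ⟨P, rfl⟩ := torusProj_surjective p p q
  exact ⟨torusProj m n P, torusRed_torusProj hpm hpn P⟩

theorem IsTorusLine.exists_mapsTo_torusRed {L : Set (ZMod m × ZMod n)} (hL : IsTorusLine m n L) :
    ∃ ℓ, IsTorusLine p p ℓ ∧ MapsTo (torusRed m n p hpm hpn) L ℓ := by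
  obtain ⟨a, b, u, v, huv, rfl⟩ := hL
  refine ⟨_, ⟨a, b, u, v, huv, rfl⟩, ?_⟩
  rintro _ ⟨P, hP, rfl⟩
  exact ⟨P, hP, (torusRed_torusProj hpm hpn P).symm⟩

theorem NoThreeInLine.image_of_leftInverse {Y : Set (ZMod p × ZMod p)} (hY : NoThreeInLine p p Y)
    {σ : ZMod p × ZMod p → ZMod m × ZMod n}
    (hσ : Function.LeftInverse (torusRed m n p hpm hpn) σ) :
    NoThreeInLine m n (σ '' Y) := by
  rintro L hL _ ⟨a, ha, rfl⟩ _ ⟨b, hb, rfl⟩ _ ⟨c, hc, rfl⟩ haL hbL hcL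
  obtain ⟨ℓ, hℓ, hmaps⟩ := hL.exists_mapsTo_torusRed hpm hpn
  have hmem : ∀ x, σ x ∈ L → x ∈ ℓ := fun x hx => hσ x ▸ hmaps hx
  rcases hY ℓ hℓ a ha b hb c hc (hmem a haL) (hmem b hbL) (hmem c hcL) with rfl | rfl | rfl <;>
    simp

variable {hpm hpn}
variable (hpre : ∀ ℓ : Set (ZMod p × ZMod p), IsTorusLine p p ℓ →
  IsTorusLine m n (torusRed m n p hpm hpn ⁻¹' ℓ))
include hpre

theorem NoThreeInLine.image_torusRed {X : Set (ZMod m × ZMod n)} (hX : NoThreeInLine m n X) :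
    NoThreeInLine p p (torusRed m n p hpm hpn '' X) := by
  rintro ℓ hℓ _ ⟨A, hA, rfl⟩ _ ⟨B, hB, rfl⟩ _ ⟨C, hC, rfl⟩ hAℓ hBℓ hCℓ
  rcases hX _ (hpre ℓ hℓ) A hA B hB C hC hAℓ hBℓ hCℓ with rfl | rfl | rfl <;> simp

theorem NoThreeInLine.injOn_torusRed {X : Set (ZMod m × ZMod n)} (hX : NoThreeInLine m n X)
    (hX₂ : 2 < X.ncard) : InjOn (torusRed m n p hpm hpn) X := by
  intro A hA B hB hAB
  by_contra hne
  have hpair : ({A, B} : Set (ZMod m × ZMod n)).ncard < X.ncard :=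
    (ncard_insert_le A {B}).trans_lt (by simpa using hX₂)
  obtain ⟨C, hC, hCAB⟩ := exists_mem_notMem_of_ncard_lt_ncard hpair
  simp only [mem_insert_iff, mem_singleton_iff, not_or] at hCAB
  obtain ⟨ℓ, hℓ, hAℓ, hCℓ⟩ :=
    exists_isTorusLine_mem_mem p p (torusRed m n p hpm hpn A) (torusRed m n p hpm hpn C)
  have hBℓ : torusRed m n p hpm hpn B ∈ ℓ := hAB ▸ hAℓ
  rcases hX _ (hpre ℓ hℓ) A hA B hB C hC hAℓ hBℓ hCℓ with h | h | h
  exacts [hne h, hCAB.1 h.symm, hCAB.2 h.symm]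

end Reduction

theorem tau_eq_of_preimage_lines_general (m n p : ℕ)
    (hpm : p ∣ m) (hpn : p ∣ n) (hp1 : 1 < p)
    (h : ∀ ℓ : Set (ZMod p × ZMod p), IsTorusLine p p ℓ →
      IsTorusLine m n (torusRed m n p hpm hpn ⁻¹' ℓ)) :
    tau m n = tau p p := by
  have : Fact (1 < p) := ⟨hp1⟩
  have hpair : NoThreeInLine p p {0, (1, 0)} ∧ ({0, (1, 0)} : Set (ZMod p × ZMod p)).ncard = 2 :=
    ⟨noThreeInLine_pair p p _ _, ncard_pair (by simp [Prod.ext_iff])⟩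
  apply csSup_eq_csSup_of_forall_exists_le
  · rintro _ ⟨X, hX, rfl⟩
    by_cases hX₂ : 2 < X.ncard
    · exact ⟨_, ⟨_, hX.image_torusRed h, (hX.injOn_torusRed h hX₂).ncard_image⟩, le_rfl⟩
    · exact ⟨2, ⟨_, hpair⟩, not_lt.mp hX₂⟩
  · rintro _ ⟨Y, hY, rfl⟩
    have hσ := Function.rightInverse_surjInv (torusRed_surjective hpm hpn)
    exact ⟨_, ⟨_, hY.image_of_leftInverse hpm hpn hσ, ncard_image_of_injective Y hσ.injective⟩,
      le_rfl⟩

/-- Lemma 4.1(2): if the preimage under ρ of every line on T_{p×p}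
is a line on T_{m×n}, then τ(T_{m×n}) = τ(T_{p×p}). -/
theorem tau_eq_of_preimage_lines (m n p : ℕ) (hm : 1 < m) (hn : 1 < n)
    (hpm : p ∣ m) (hpn : p ∣ n) (hgcd : Nat.gcd m n = p) (hp1 : 1 < p)
    (h : ∀ ℓ : Set (ZMod p × ZMod p), IsTorusLine p p ℓ →
      IsTorusLine m n (torusRed m n p hpm hpn ⁻¹' ℓ)) :
    tau m n = tau p p :=
  tau_eq_of_preimage_lines_general m n p hpm hpn hp1 h
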